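/- arXiv:2012.05529 — 2 statements merged into one kernel-verified Lean document; each statement's English description precedes it below -/
import Mathlib

section
/- Consider the ternary QUANT iteration with unit teacher vector w* ∈ ℝⁿ and suppose w* ∉ Q₃. Then for each coordinate j ∈ {1, …, n}: (i) if w*_j = 0, then the sequence (y^t_j)_{t≥0} is bounded (there is C with |y^t_j| ≤ C for all t) and w^t_j = 0 for all but finitely many t; (ii) if w*_j ≠ 0, then sgn(y^t_j) = sgn(w*_j) for all but finitely many t. -/
open Real Filter Set

/-- Euclidean norm of a vector in `Fin k → ℝ`. -/
noncomputable def euclNorm {k : ℕ} (x : Fin k → ℝ) : ℝ := Real.sqrt (∑ i, x i ^ 2)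

/-- ℓ¹ norm of a vector in `Fin k → ℝ`. -/
noncomputable def l1Norm {k : ℕ} (x : Fin k → ℝ) : ℝ := ∑ i, |x i|

/-- `s` is a ternary sign vector, i.e. `s ∈ {−1,0,1}ⁿ`. -/
def IsTern {k : ℕ} (s : Fin k → ℝ) : Prop := ∀ i, s i = -1 ∨ s i = 0 ∨ s i = 1

/-- `x` belongs to the ternary quantized set `Q₃ = {δ·s : δ ≥ 0, s ∈ {−1,0,1}ⁿ}`. -/
def InQ3 {k : ℕ} (x : Fin k → ℝ) : Prop :=
  ∃ δ : ℝ, 0 ≤ δ ∧ ∃ s : Fin k → ℝ, IsTern s ∧ x = δ • s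

/-- `u` is a normalized ternary projection of `y`: `u = s/‖s‖` for a nonzero
ternary sign vector `s` maximizing `⟨y, s'⟩/‖s'‖` over nonzero ternary `s'`. -/
noncomputable def IsNTernProj {k : ℕ} (y u : Fin k → ℝ) : Prop :=
  ∃ s : Fin k → ℝ, IsTern s ∧ s ≠ 0 ∧
    (∀ s' : Fin k → ℝ, IsTern s' → s' ≠ 0 →
      (∑ i, y i * s' i) / euclNorm s' ≤ (∑ i, y i * s i) / euclNorm s) ∧
    u = fun i => s i / euclNorm s

lemma tern_sq_le_one {n : ℕ} {s : Fin n → ℝ} (hs : IsTern s) (i : Fin n) : s i ^ 2 ≤ 1 := by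
  rcases hs i with h | h | h <;> rw [h] <;> norm_num

lemma tern_sq_eq_one {n : ℕ} {s : Fin n → ℝ} (hs : IsTern s) {i : Fin n} (hi : s i ≠ 0) :
    s i ^ 2 = 1 := by
  rcases hs i with h | h | h
  · rw [h]; norm_num
  · exact absurd h hi
  · rw [h]; norm_num

lemma sum_sq_tern_ge_one {n : ℕ} {s : Fin n → ℝ} (hs : IsTern s) {i : Fin n} (hi : s i ≠ 0) :
    1 ≤ ∑ i, s i ^ 2 := by
  have h := tern_sq_eq_one hs hi
  calc (1:ℝ) = s i ^ 2 := h.symm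
    _ ≤ ∑ i, s i ^ 2 :=
      Finset.single_le_sum (fun i _ => sq_nonneg (s i)) (Finset.mem_univ i)

lemma sum_sq_tern_le {n : ℕ} {s : Fin n → ℝ} (hs : IsTern s) : ∑ i, s i ^ 2 ≤ n := by
  calc ∑ i, s i ^ 2 ≤ ∑ _i : Fin n, (1:ℝ) := Finset.sum_le_sum (fun i _ => tern_sq_le_one hs i)
    _ = n := by simp

lemma sum_mul_update {n : ℕ} (y s : Fin n → ℝ) (j : Fin n) (a : ℝ) :
    ∑ i, y i * (Function.update s j a) i = (∑ i, y i * s i) + y j * (a - s j) := by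
  classical
  have h : ∀ i : Fin n, y i * Function.update s j a i
      = y i * s i + (if i = j then y j * (a - s j) else 0) := by
    intro i
    by_cases h : i = j
    · subst h; rw [Function.update_self]; simp; ring
    · rw [Function.update_of_ne h]; simp [h]
  rw [Finset.sum_congr rfl (fun i _ => h i), Finset.sum_add_distrib,
    Finset.sum_ite_eq' Finset.univ j (fun _ => y j * (a - s j))]
  simp

lemma sum_sq_update {n : ℕ} (s : Fin n → ℝ) (j : Fin n) (a : ℝ) :
    ∑ i, (Function.update s j a) i ^ 2 = (∑ i, s i ^ 2) + (a ^ 2 - s j ^ 2) := by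
  classical
  have h : ∀ i : Fin n, (Function.update s j a) i ^ 2
      = s i ^ 2 + (if i = j then a ^ 2 - s j ^ 2 else 0) := by
    intro i
    by_cases h : i = j
    · subst h; rw [Function.update_self]; simp
    · rw [Function.update_of_ne h]; simp [h]
  rw [Finset.sum_congr rfl (fun i _ => h i), Finset.sum_add_distrib,
    Finset.sum_ite_eq' Finset.univ j (fun _ => a ^ 2 - s j ^ 2)]
  simp

lemma ntern_abs_le_one {n : ℕ} {y u : Fin n → ℝ} (h : IsNTernProj y u) (j : Fin n) :
    |u j| ≤ 1 := by
  obtain ⟨s, hs, hs0, _, hu⟩ := h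
  obtain ⟨i0, hi0⟩ := Function.ne_iff.mp hs0
  simp only [Pi.zero_apply] at hi0
  have hk1 : (1:ℝ) ≤ ∑ i, s i ^ 2 := sum_sq_tern_ge_one hs hi0
  have hN1 : (1:ℝ) ≤ euclNorm s := by
    unfold euclNorm
    rw [show (1:ℝ) = Real.sqrt 1 by simp]
    exact Real.sqrt_le_sqrt hk1
  have hsj : |s j| ≤ 1 := by
    rcases hs j with h | h | h <;> rw [h] <;> norm_num
  rw [hu]
  simp only [abs_div]
  rw [abs_of_nonneg (by positivity : (0:ℝ) ≤ euclNorm s)]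
  calc |s j| / euclNorm s ≤ 1 / 1 :=
        div_le_div₀ (by norm_num) hsj (by norm_num) hN1
    _ = 1 := by norm_num

set_option maxHeartbeats 1000000 in
lemma proj_key {n : ℕ} (y u : Fin n → ℝ) (h : IsNTernProj y u)
    (hy : ∃ i, y i ≠ 0) (j : Fin n) (hj : u j ≠ 0) :
    0 < u j * y j ∧ ∀ i, |y i| ≤ 2 * n * |y j| := by
  classical
  obtain ⟨s, hs, hs0, hmax, hu⟩ := h
  set k := ∑ i, s i ^ 2 with hk
  obtain ⟨i0, hi0⟩ := Function.ne_iff.mp hs0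
  simp only [Pi.zero_apply] at hi0
  have hk1 : (1:ℝ) ≤ k := sum_sq_tern_ge_one hs hi0
  have hkn : k ≤ n := sum_sq_tern_le hs
  have hn1 : (1:ℝ) ≤ n := le_trans hk1 hkn
  set N := euclNorm s with hNdef
  have hNsq : N ^ 2 = k := by
    rw [hNdef]; unfold euclNorm
    exact Real.sq_sqrt (by positivity)
  have hN1 : (1:ℝ) ≤ N := by
    rw [hNdef]; unfold euclNorm
    rw [show (1:ℝ) = Real.sqrt 1 by simp]
    exact Real.sqrt_le_sqrt hk1
  have hNpos : 0 < N := lt_of_lt_of_le one_pos hN1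
  have hNn : N ≤ n := by nlinarith
  have hsj : s j ≠ 0 := by
    intro hzero
    apply hj
    rw [hu]
    simp [hzero]
  have hsj1 : s j ^ 2 = 1 := tern_sq_eq_one hs hsj
  have hsjabs : |s j| = 1 := by
    rcases hs j with h|h|h
    · rw [h]; norm_num
    · exact absurd h hsj
    · rw [h]; norm_num
  set V := (∑ i, y i * s i) / N with hV
  -- Claim 1 : |y i| ≤ V
  have claim1 : ∀ i, |y i| ≤ V := by
    intro i0'
    set e : Fin n → ℝ := fun i => if i = i0' then (if 0 ≤ y i0' then 1 else -1) else 0 with he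
    have hte : IsTern e := by
      intro i; by_cases h1 : i = i0' <;> by_cases h2 : 0 ≤ y i0' <;> simp [he, h1, h2]
    have hene : e ≠ 0 := by
      apply Function.ne_iff.mpr ⟨i0', ?_⟩
      by_cases h2 : 0 ≤ y i0' <;> simp [he, h2]
    have hesq : ∑ i, e i ^ 2 = 1 := by
      have : ∀ i : Fin n, e i ^ 2 = if i = i0' then 1 else 0 := by
        intro i; by_cases h1 : i = i0' <;> by_cases h2 : 0 ≤ y i0' <;> simp [he, h1, h2]
      rw [Finset.sum_congr rfl (fun i _ => this i),
        Finset.sum_ite_eq' Finset.univ i0' (fun _ => (1:ℝ))]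
      simp
    have heN : euclNorm e = 1 := by unfold euclNorm; rw [hesq]; simp
    have hesum : ∑ i, y i * e i = |y i0'| := by
      have : ∀ i : Fin n, y i * e i = if i = i0' then |y i0'| else 0 := by
        intro i; by_cases h1 : i = i0'
        · subst h1
          by_cases h2 : 0 ≤ y i
          · simp [he, h2, abs_of_nonneg h2]
          · simp only [he, if_pos rfl, if_neg h2, if_pos]
            rw [abs_of_neg (lt_of_not_ge h2)]; ring
        · simp [he, h1]
      rw [Finset.sum_congr rfl (fun i _ => this i),
        Finset.sum_ite_eq' Finset.univ i0' (fun _ => |y i0'|)]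
      simp
    have := hmax e hte hene
    rw [heN, hesum] at this
    simpa using this
  have hV0 : 0 < V := by
    obtain ⟨i1, hi1⟩ := hy
    exact lt_of_lt_of_le (abs_pos.mpr hi1) (claim1 i1)
  have hsumys : ∑ i, y i * s i = V * N := by
    rw [hV]; field_simp
  -- Claim 2 : 0 ≤ y j * s j  (flip)
  have claim2 : 0 ≤ y j * s j := by
    set s' := Function.update s j (-(s j)) with hs'
    have hts' : IsTern s' := by
      intro i; by_cases h1 : i = j
      · subst h1; rw [hs', Function.update_self]
        rcases hs i with h|h|h <;> rw [h] <;> norm_num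
      · rw [hs', Function.update_of_ne h1]; exact hs i
    have hs'ne : s' ≠ 0 := by
      apply Function.ne_iff.mpr ⟨j, ?_⟩
      rw [hs', Function.update_self]
      simpa using hsj
    have hs'N : euclNorm s' = N := by
      rw [hNdef]; unfold euclNorm
      rw [hs', sum_sq_update]
      norm_num
    have hs'sum : ∑ i, y i * s' i = (∑ i, y i * s i) - 2 * (y j * s j) := by
      rw [hs', sum_mul_update]; ring
    have h6 := hmax s' hts' hs'ne
    rw [hs'N, hs'sum] at h6
    have h7 := (div_le_iff₀ hNpos).mp h6
    nlinarith [hsumys, h7]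
  -- Claim 3 : V / (2*n) ≤ y j * s j
  have claim3 : V / (2 * n) ≤ y j * s j := by
    by_cases hcase : ∀ i, i ≠ j → s i = 0
    · -- singleton support
      have hkeq : k = 1 := by
        rw [hk]
        rw [Finset.sum_eq_single j (fun i _ hij => by rw [hcase i hij]; ring) (by simp)]
        exact hsj1
      have hNeq : N = 1 := by nlinarith
      have hsum : ∑ i, y i * s i = y j * s j := by
        rw [Finset.sum_eq_single j (fun i _ hij => by rw [hcase i hij]; ring) (by simp)]
      have hVeq : V = y j * s j := by rw [hV, hNeq, hsum]; simp
      rw [hVeq] at hV0 ⊢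
      exact div_le_self hV0.le (by linarith)
    · push_neg at hcase
      obtain ⟨i1, hi1j, hi1⟩ := hcase
      set s'' := Function.update s j 0 with hs''
      have hts'' : IsTern s'' := by
        intro i; by_cases h1 : i = j
        · subst h1; rw [hs'', Function.update_self]; right; left; rfl
        · rw [hs'', Function.update_of_ne h1]; exact hs i
      have hs''ne : s'' ≠ 0 := by
        apply Function.ne_iff.mpr ⟨i1, ?_⟩
        rw [hs'', Function.update_of_ne hi1j]
        simpa using hi1
      have hk2 : (2:ℝ) ≤ k := by
        have hsub : ({j, i1} : Finset (Fin n)) ⊆ Finset.univ := Finset.subset_univ _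
        have : ∑ i ∈ ({j, i1} : Finset (Fin n)), s i ^ 2 ≤ k := by
          rw [hk]
          exact Finset.sum_le_sum_of_subset_of_nonneg hsub (fun i _ _ => sq_nonneg _)
        rw [Finset.sum_pair (Ne.symm hi1j)] at this
        rw [hsj1, tern_sq_eq_one hs hi1] at this
        linarith
      set r := Real.sqrt (k - 1) with hr
      have hr0 : 0 ≤ r := Real.sqrt_nonneg _
      have hrsq : r ^ 2 = k - 1 := Real.sq_sqrt (by linarith)
      have hr1 : 1 ≤ r := by
        have := Real.sqrt_le_sqrt (show (1:ℝ) ≤ k - 1 by linarith)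
        simpa [hr] using this
      have hrN : r ≤ N := by nlinarith
      have hs''N : euclNorm s'' = r := by
        rw [hr]; unfold euclNorm
        rw [hs'', sum_sq_update, hsj1]
        congr 1
        rw [← hk]; ring
      have hs''sum : ∑ i, y i * s'' i = V * N - y j * s j := by
        rw [hs'', sum_mul_update, hsumys]; ring
      have hmax'' := hmax s'' hts'' hs''ne
      rw [hs''N, hs''sum] at hmax''
      have hrpos : 0 < r := lt_of_lt_of_le one_pos hr1
      have hA : V * N - y j * s j ≤ V * r := (div_le_iff₀ hrpos).mp hmax'' 
      clear_value V N r k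
      have hprod : (N - r) * (N + r) = 1 := by nlinarith
      have hsum_pos : 0 < N + r := by linarith
      have hNr_pos : 0 < N - r := by nlinarith [mul_nonneg (le_of_lt hsum_pos) (le_of_lt hsum_pos)]
      have h3 : N + r ≤ 2 * n := by linarith
      have h4 : 1 / (2 * n) ≤ N - r := by
        have h5 : N - r = 1 / (N + r) := by
          field_simp
          nlinarith [hprod]
        rw [h5]
        exact one_div_le_one_div_of_le hsum_pos h3
      calc V / (2 * n) = V * (1 / (2 * n)) := by ring
        _ ≤ V * (N - r) := mul_le_mul_of_nonneg_left h4 hV0.le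
        _ ≤ y j * s j := by
            have hexp : V * (N - r) = V * N - V * r := by ring
            linarith [hA, hexp]
  have hyspos : 0 < y j * s j := lt_of_lt_of_le (by positivity) claim3
  constructor
  · rw [hu]
    have : s j / N * y j = (y j * s j) / N := by ring
    rw [this]
    exact div_pos hyspos hNpos
  · intro i
    have h1 : V ≤ 2 * n * (y j * s j) := by
      rw [div_le_iff₀ (by positivity)] at claim3
      linarith [claim3]
    have h2 : y j * s j ≤ |y j| := by
      calc y j * s j ≤ |y j * s j| := le_abs_self _
        _ = |y j| * |s j| := abs_mul _ _
        _ = |y j| := by rw [hsjabs]; ring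
    calc |y i| ≤ V := claim1 i
      _ ≤ 2 * n * (y j * s j) := h1
      _ ≤ 2 * n * |y j| := by nlinarith

lemma abs_sub_helper {a d C : ℝ} (h1 : |a| ≤ C) (h2 : |d| ≤ C) (h3 : 0 ≤ a * d) :
    |a - d| ≤ C := by
  rw [abs_le] at h1 h2 ⊢
  have hC : 0 ≤ C := by linarith [h1.1, h1.2]
  constructor
  · nlinarith [mul_nonneg (by linarith [h2.2] : (0:ℝ) ≤ C - d) (by linarith [h1.1] : (0:ℝ) ≤ C + a), h3]
  · nlinarith [mul_nonneg (by linarith [h1.2] : (0:ℝ) ≤ C - a) (by linarith [h2.1] : (0:ℝ) ≤ C + d), h3]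

lemma euclNorm_one_sum {n : ℕ} {x : Fin n → ℝ} (h : euclNorm x = 1) : ∑ i, x i ^ 2 = 1 := by
  unfold euclNorm at h
  nlinarith [Real.sq_sqrt (show (0:ℝ) ≤ ∑ i, x i ^ 2 by positivity), h]

set_option maxHeartbeats 1000000 in
lemma exists_rho {n : ℕ} (hn : 1 ≤ n) (wstar : Fin n → ℝ) (hw1 : ∑ i, wstar i ^ 2 = 1)
    (hQ : ¬ InQ3 wstar) :
    ∃ ρ : ℝ, ρ < 1 ∧ ∀ s : Fin n → ℝ, IsTern s → s ≠ 0 →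
      (∑ i, wstar i * s i) / euclNorm s ≤ ρ := by
  classical
  set A : Set ℝ :=
    {x | ∃ s : Fin n → ℝ, IsTern s ∧ s ≠ 0 ∧ x = (∑ i, wstar i * s i) / euclNorm s} with hA
  have hternfin : {s : Fin n → ℝ | IsTern s}.Finite := by
    apply Set.Finite.subset
      (Set.Finite.pi (fun i : Fin n =>
        (Set.finite_singleton (-1:ℝ)).insert 0 |>.insert 1))
    intro s hs
    intro i _
    rcases hs i with h|h|h <;> simp [h]
  have hAfin : A.Finite := by
    apply Set.Finite.subset (hternfin.image (fun s => (∑ i, wstar i * s i) / euclNorm s))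
    rintro x ⟨s, hs, _, rfl⟩
    exact ⟨s, hs, rfl⟩
  have hAlt : ∀ x ∈ A, x < 1 := by
    rintro x ⟨s, hs, hs0, rfl⟩
    obtain ⟨i0, hi0⟩ := Function.ne_iff.mp hs0
    simp only [Pi.zero_apply] at hi0
    set k := ∑ i, s i ^ 2 with hk
    have hk1 : (1:ℝ) ≤ k := sum_sq_tern_ge_one hs hi0
    set N := euclNorm s with hNdef
    have hNsq : N ^ 2 = k := Real.sq_sqrt (by positivity)
    have hNpos : 0 < N := by
      have : (1:ℝ) ≤ N := by
        have := Real.sqrt_le_sqrt hk1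
        simpa [hNdef, euclNorm, ← hk] using this
      linarith
    set uu : Fin n → ℝ := fun i => s i / N with huu
    have husq : ∑ i, uu i ^ 2 = 1 := by
      have : ∀ i : Fin n, uu i ^ 2 = s i ^ 2 / N ^ 2 := fun i => by
        rw [huu]; rw [div_pow]
      rw [Finset.sum_congr rfl (fun i _ => this i), ← Finset.sum_div, ← hk, hNsq]
      field_simp
    have hwne : wstar ≠ uu := by
      intro heq
      apply hQ
      refine ⟨N⁻¹, by positivity, s, hs, ?_⟩
      funext i
      rw [heq, huu]
      simp [div_eq_inv_mul]
    obtain ⟨i1, hi1⟩ := Function.ne_iff.mp hwne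
    have hpos : 0 < ∑ i, (wstar i - uu i) ^ 2 := by
      apply Finset.sum_pos' (fun i _ => sq_nonneg _)
      refine ⟨i1, Finset.mem_univ i1, ?_⟩
      have h := sub_ne_zero.mpr hi1
      exact lt_of_le_of_ne (sq_nonneg _) (Ne.symm (pow_ne_zero 2 h))
    have hexpand : ∑ i, (wstar i - uu i) ^ 2
        = (∑ i, wstar i ^ 2) - 2 * (∑ i, wstar i * uu i) + ∑ i, uu i ^ 2 := by
      have h1 : ∀ i : Fin n, (wstar i - uu i) ^ 2
          = wstar i ^ 2 - 2 * (wstar i * uu i) + uu i ^ 2 := fun i => by ring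
      rw [Finset.sum_congr rfl (fun i _ => h1 i), Finset.sum_add_distrib,
        Finset.sum_sub_distrib, ← Finset.mul_sum]
    have hip : (∑ i, wstar i * s i) / N = ∑ i, wstar i * uu i := by
      rw [Finset.sum_div]
      exact Finset.sum_congr rfl (fun i _ => by rw [huu]; ring)
    rw [hip]
    linarith [hpos, hexpand, hw1, husq]
  have hAne : A.Nonempty := by
    refine ⟨_, (fun _ => (1:ℝ)), fun i => Or.inr (Or.inr rfl), ?_, rfl⟩
    exact Function.ne_iff.mpr ⟨⟨0, by omega⟩, by simp⟩
  have hFne : hAfin.toFinset.Nonempty := (Set.Finite.toFinset_nonempty _).mpr hAne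
  refine ⟨hAfin.toFinset.max' hFne, ?_, ?_⟩
  · exact hAlt _ (hAfin.mem_toFinset.mp (hAfin.toFinset.max'_mem hFne))
  · intro s hs hs0
    exact Finset.le_max' _ _ (hAfin.mem_toFinset.mpr ⟨s, hs, hs0, rfl⟩)

set_option maxHeartbeats 1000000

/-- Ternary QUANT iteration with `w* ∉ Q₃`: for each coordinate `j`,
(i) if `w*_j = 0` then `(y^t_j)` is bounded and `w^t_j = 0` for all but finitely many `t`;
(ii) if `w*_j ≠ 0` then `sgn(y^t_j) = sgn(w*_j)` for all but finitely many `t`. -/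
theorem stmt17 (n m : ℕ) (hn : 1 ≤ n)
    (wstar : Fin n → ℝ) (hws : euclNorm wstar = 1) (hQ : ¬ InQ3 wstar)
    (v : Fin m → ℝ) (hv : v ≠ 0)
    (c : ℝ) (hc : c = euclNorm v ^ 2 / (2 * Real.sqrt (2 * π)))
    (η : ℕ → ℝ) (ηbar : ℝ) (hη0 : ∀ t, 0 < η t) (hηb : ∀ t, η t ≤ ηbar)
    (hηsum : Tendsto (fun T => ∑ t ∈ Finset.range T, η t) atTop atTop)
    (y w : ℕ → Fin n → ℝ)
    (hproj : ∀ t, IsNTernProj (y t) (w t))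
    (hy : ∀ t i, y (t + 1) i = y t i + η t * c * (wstar i - w t i)) :
    ∀ j : Fin n,
      (wstar j = 0 →
        (∃ C : ℝ, ∀ t, |y t j| ≤ C) ∧ {t | w t j ≠ 0}.Finite) ∧
      (wstar j ≠ 0 →
        {t | Real.sign (y t j) ≠ Real.sign (wstar j)}.Finite) := by
  classical
  have hn1 : (1:ℝ) ≤ (n:ℝ) := by exact_mod_cast hn
  have hvpos : 0 < euclNorm v := by
    obtain ⟨i0, hi0⟩ := Function.ne_iff.mp hv
    simp only [Pi.zero_apply] at hi0
    unfold euclNorm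
    apply Real.sqrt_pos.mpr
    apply Finset.sum_pos' (fun i _ => sq_nonneg _)
    exact ⟨i0, Finset.mem_univ i0, lt_of_le_of_ne (sq_nonneg _) (Ne.symm (pow_ne_zero 2 hi0))⟩
  have hc0 : 0 < c := by
    rw [hc]
    apply div_pos (pow_pos hvpos 2)
    have h2π : 0 < Real.sqrt (2 * π) := Real.sqrt_pos.mpr (by positivity)
    linarith
  have hηbar0 : 0 < ηbar := lt_of_lt_of_le (hη0 0) (hηb 0)
  have hw1 : ∑ i, wstar i ^ 2 = 1 := euclNorm_one_sum hws
  have hl1 : ∑ i, |wstar i| ≤ (n:ℝ) := by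
    calc ∑ i, |wstar i| ≤ ∑ _i : Fin n, (1:ℝ) := by
          apply Finset.sum_le_sum
          intro i _
          have h := Finset.single_le_sum (fun i _ => sq_nonneg (wstar i)) (Finset.mem_univ i)
          rw [hw1] at h
          nlinarith [abs_nonneg (wstar i), sq_abs (wstar i)]
      _ = n := by simp
  obtain ⟨ρ, hρ1, hρb⟩ := exists_rho hn wstar hw1 hQ
  set P : ℕ → ℝ := fun t => ∑ i, y t i * wstar i with hPdef
  have hWle : ∀ t, ∑ i, w t i * wstar i ≤ ρ := by
    intro t
    obtain ⟨s, hs, hs0, hmax, hu⟩ := hproj t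
    have heq : ∑ i, w t i * wstar i = (∑ i, wstar i * s i) / euclNorm s := by
      rw [Finset.sum_div]
      refine Finset.sum_congr rfl (fun i _ => ?_)
      simp only [hu]
      ring
    rw [heq]
    exact hρb s hs hs0
  have hPstep : ∀ t, P (t+1) = P t + η t * c * (1 - ∑ i, w t i * wstar i) := by
    intro t
    show (∑ i, y (t+1) i * wstar i) = _
    calc (∑ i, y (t+1) i * wstar i)
        = ∑ i, (y t i * wstar i + η t * c * (wstar i ^ 2 - w t i * wstar i)) := by
          refine Finset.sum_congr rfl (fun i _ => ?_)
          rw [hy t i]; ring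
      _ = (∑ i, y t i * wstar i)
            + η t * c * ((∑ i, wstar i ^ 2) - ∑ i, w t i * wstar i) := by
          rw [Finset.sum_add_distrib, ← Finset.mul_sum, Finset.sum_sub_distrib]
      _ = P t + η t * c * (1 - ∑ i, w t i * wstar i) := by rw [hw1]
  have hPmono : ∀ t, P t + η t * c * (1 - ρ) ≤ P (t+1) := by
    intro t
    rw [hPstep t]
    have h1 : 1 - ρ ≤ 1 - ∑ i, w t i * wstar i := by linarith [hWle t]
    have h2 := mul_le_mul_of_nonneg_left h1 (mul_nonneg (hη0 t).le hc0.le)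
    linarith
  have hPtend : Tendsto P atTop atTop := by
    have hg : ∀ t, P 0 + (c * (1 - ρ)) * (∑ τ ∈ Finset.range t, η τ) ≤ P t := by
      intro t
      induction t with
      | zero => simp
      | succ t ih =>
        rw [Finset.sum_range_succ]
        have h3 := hPmono t
        have hring : (c * (1-ρ)) * ((∑ τ ∈ Finset.range t, η τ) + η t)
            = (c * (1-ρ)) * (∑ τ ∈ Finset.range t, η τ) + η t * c * (1-ρ) := by ring
        linarith
    apply tendsto_atTop_mono hg
    apply tendsto_atTop_add_const_left
    exact Tendsto.const_mul_atTop (by nlinarith : (0:ℝ) < c * (1 - ρ)) hηsum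
  have hyne : ∀ t, 0 < P t → ∃ i, y t i ≠ 0 := by
    intro t hP
    by_contra h
    push_neg at h
    have hz : P t = 0 := Finset.sum_eq_zero (fun i _ => by rw [h i]; ring)
    linarith
  have hkey : ∀ t (j : Fin n), 0 < P t → w t j ≠ 0 →
      0 < w t j * y t j ∧ P t ≤ 2 * (n:ℝ)^2 * |y t j| := by
    intro t j hP hw
    obtain ⟨h1, h2⟩ := proj_key (y t) (w t) (hproj t) (hyne t hP) j hw
    refine ⟨h1, ?_⟩
    calc P t ≤ ∑ i, |y t i| * |wstar i| := by
          apply Finset.sum_le_sum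
          intro i _
          calc y t i * wstar i ≤ |y t i * wstar i| := le_abs_self _
            _ = |y t i| * |wstar i| := abs_mul _ _
      _ ≤ ∑ i, (2 * (n:ℝ) * |y t j|) * |wstar i| := by
          apply Finset.sum_le_sum
          intro i _
          exact mul_le_mul_of_nonneg_right (h2 i) (abs_nonneg _)
      _ = (2 * (n:ℝ) * |y t j|) * ∑ i, |wstar i| := by rw [← Finset.mul_sum]
      _ ≤ (2 * (n:ℝ) * |y t j|) * n := by
          apply mul_le_mul_of_nonneg_left hl1
          positivity
      _ = 2 * (n:ℝ)^2 * |y t j| := by ring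
  intro j
  constructor
  · -- (i) wstar j = 0
    intro hwj0
    set C := max (|y 0 j|) (ηbar * c) with hC
    have hCpos : 0 < C := lt_of_lt_of_le (mul_pos hηbar0 hc0) (le_max_right _ _)
    have hdC : ∀ t, |η t * c * w t j| ≤ C := by
      intro t
      have habsw : |w t j| ≤ 1 := ntern_abs_le_one (hproj t) j
      calc |η t * c * w t j| = η t * c * |w t j| := by
            rw [abs_mul, abs_of_nonneg (mul_nonneg (hη0 t).le hc0.le)]
        _ ≤ ηbar * c * 1 := by
            apply mul_le_mul (mul_le_mul_of_nonneg_right (hηb t) hc0.le) habsw (abs_nonneg _)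
            exact mul_nonneg hηbar0.le hc0.le
        _ ≤ C := by rw [mul_one]; exact le_max_right _ _
    have hbound : ∀ t, |y t j| ≤ C := by
      intro t
      induction t with
      | zero => exact le_max_left _ _
      | succ t ih =>
        have hrec : y (t+1) j = y t j - η t * c * w t j := by rw [hy t j, hwj0]; ring
        by_cases hw : w t j = 0
        · rw [hrec, hw]; simpa using ih
        · by_cases hy0 : ∃ i, y t i ≠ 0
          · obtain ⟨h1, _⟩ := proj_key (y t) (w t) (hproj t) hy0 j hw
            rw [hrec]
            apply abs_sub_helper ih (hdC t)
            nlinarith [mul_pos (mul_pos (hη0 t) hc0) h1]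
          · push_neg at hy0
            rw [hrec, hy0 j, zero_sub, abs_neg]
            exact hdC t
    refine ⟨⟨C, hbound⟩, ?_⟩
    obtain ⟨T, hT⟩ := Filter.eventually_atTop.mp (hPtend.eventually_gt_atTop (2 * (n:ℝ)^2 * C))
    apply Set.Finite.subset (Set.finite_Iio T)
    intro t ht
    simp only [Set.mem_setOf_eq] at ht
    rw [Set.mem_Iio]
    by_contra hlt
    push_neg at hlt
    have hPt := hT t hlt
    have hPpos : 0 < P t := lt_of_le_of_lt (by positivity) hPt
    obtain ⟨_, h2⟩ := hkey t j hPpos ht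
    have hb := hbound t
    nlinarith [h2, hPt, hb, sq_nonneg (n:ℝ)]
  · -- (ii) wstar j ≠ 0
    intro hwj
    set σ : ℝ := if 0 < wstar j then 1 else -1 with hσ
    have hb : 0 < σ * wstar j := by
      rcases lt_trichotomy (wstar j) 0 with h|h|h
      · rw [hσ, if_neg (by linarith)]; nlinarith
      · exact absurd h hwj
      · rw [hσ, if_pos h]; nlinarith
    have hσ2 : σ * σ = 1 := by rw [hσ]; split_ifs <;> norm_num
    have hσabs : |σ| = 1 := by rw [hσ]; split_ifs <;> norm_num
    have hzrec : ∀ t, σ * y (t+1) j = σ * y t j + η t * c * (σ * wstar j - σ * w t j) := by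
      intro t; rw [hy t j]; ring
    have halign : ∀ t, 0 < P t → w t j ≠ 0 →
        0 < (σ * w t j) * (σ * y t j) ∧ P t ≤ 2 * (n:ℝ)^2 * |σ * y t j| := by
      intro t hP hw
      obtain ⟨h1, h2⟩ := hkey t j hP hw
      constructor
      · have hh : (σ * w t j) * (σ * y t j) = (σ * σ) * (w t j * y t j) := by ring
        rw [hh, hσ2, one_mul]; exact h1
      · rw [abs_mul, hσabs, one_mul]; exact h2
    have hwabs : ∀ t, |σ * w t j| ≤ 1 := by
      intro t
      rw [abs_mul, hσabs, one_mul]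
      exact ntern_abs_le_one (hproj t) j
    obtain ⟨T, hT⟩ := Filter.eventually_atTop.mp
      (hPtend.eventually_gt_atTop (2 * (n:ℝ)^2 * (ηbar * c)))
    have hTpos : ∀ t, T ≤ t → 0 < P t := by
      intro t ht
      refine lt_of_le_of_lt ?_ (hT t ht)
      have := mul_pos hηbar0 hc0
      positivity
    have claimA : ∀ t, T ≤ t → 0 < σ * y t j → 0 < σ * y (t+1) j := by
      intro t ht hzt
      by_cases hcase : σ * y t j ≤ ηbar * c
      · have hw0 : w t j = 0 := by
          by_contra hw
          obtain ⟨_, h2⟩ := halign t (hTpos t ht) hw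
          rw [abs_of_pos hzt] at h2
          nlinarith [hT t ht, sq_nonneg (n:ℝ)]
        rw [hzrec t, hw0, mul_zero, sub_zero]
        have hpos : 0 < η t * c * (σ * wstar j) := mul_pos (mul_pos (hη0 t) hc0) hb
        linarith
      · push_neg at hcase
        rw [hzrec t]
        have h1 : -(1:ℝ) ≤ σ * wstar j - σ * w t j := by
          have h5 := hwabs t
          rw [abs_le] at h5
          linarith [hb, h5.2]
        have hpos : 0 < η t * c := mul_pos (hη0 t) hc0
        have hle : η t * c ≤ ηbar * c := mul_le_mul_of_nonneg_right (hηb t) hc0.le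
        nlinarith [h1]
    have claimB : ∃ T1, T ≤ T1 ∧ 0 < σ * y T1 j := by
      by_contra hcon
      push_neg at hcon
      have hstep : ∀ t, T ≤ t →
          σ * y t j + η t * c * (σ * wstar j) ≤ σ * y (t+1) j := by
        intro t ht
        have hzt : σ * y t j ≤ 0 := hcon t ht
        have hω : σ * w t j ≤ 0 := by
          by_cases hw : w t j = 0
          · rw [hw, mul_zero]
          · obtain ⟨h1, _⟩ := halign t (hTpos t ht) hw
            nlinarith [h1, hzt]
        rw [hzrec t]
        have h6 : η t * c * (σ * wstar j) ≤ η t * c * (σ * wstar j - σ * w t j) :=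
          mul_le_mul_of_nonneg_left (by linarith) (mul_pos (hη0 t) hc0).le
        linarith
      have hlower : ∀ d : ℕ, σ * y T j + (c * (σ * wstar j)) *
          ((∑ τ ∈ Finset.range (T + d), η τ) - (∑ τ ∈ Finset.range T, η τ))
          ≤ σ * y (T + d) j := by
        intro d
        induction d with
        | zero => simp
        | succ d ih =>
          have hstepd := hstep (T + d) (Nat.le_add_right T d)
          rw [show T + (d+1) = (T + d) + 1 from rfl, Finset.sum_range_succ]
          have hring : (c * (σ * wstar j)) *
              (((∑ τ ∈ Finset.range (T + d), η τ) + η (T + d)) - (∑ τ ∈ Finset.range T, η τ))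
              = (c * (σ * wstar j)) *
                ((∑ τ ∈ Finset.range (T + d), η τ) - (∑ τ ∈ Finset.range T, η τ))
                + η (T + d) * c * (σ * wstar j) := by ring
          linarith
      have hcb : 0 < c * (σ * wstar j) := mul_pos hc0 hb
      obtain ⟨M, hM⟩ := Filter.eventually_atTop.mp (hηsum.eventually_gt_atTop
        ((∑ τ ∈ Finset.range T, η τ) + (1 - σ * y T j) / (c * (σ * wstar j))))
      have hle' : T ≤ max M T := le_max_right M T
      have ht0 : T + (max M T - T) = max M T := by omega
      have hS := hM (max M T) (le_max_left M T)
      have hlow := hlower (max M T - T)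
      rw [ht0] at hlow
      have hz0 : σ * y (max M T) j ≤ 0 := hcon _ hle'
      have hgt : (1 - σ * y T j) / (c * (σ * wstar j))
          < (∑ τ ∈ Finset.range (max M T), η τ) - (∑ τ ∈ Finset.range T, η τ) := by
        linarith
      have hgt2 : 1 - σ * y T j < (c * (σ * wstar j)) *
          ((∑ τ ∈ Finset.range (max M T), η τ) - (∑ τ ∈ Finset.range T, η τ)) := by
        have := (div_lt_iff₀ hcb).mp hgt
        linarith
      linarith
    obtain ⟨T1, hTT1, hz1⟩ := claimB
    have hall : ∀ t, T1 ≤ t → 0 < σ * y t j := by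
      intro t ht
      induction t, ht using Nat.le_induction with
      | base => exact hz1
      | succ t ht ih => exact claimA t (le_trans hTT1 ht) ih
    apply Set.Finite.subset (Set.finite_Iio T1)
    intro t ht
    simp only [Set.mem_setOf_eq] at ht
    rw [Set.mem_Iio]
    by_contra hlt
    push_neg at hlt
    apply ht
    have hzt := hall t hlt
    rcases lt_trichotomy (wstar j) 0 with h|h|h
    · have hσneg : σ = -1 := by rw [hσ, if_neg (by linarith)]
      rw [hσneg] at hzt
      have hyneg : y t j < 0 := by nlinarith
      rw [Real.sign_of_neg hyneg, Real.sign_of_neg h]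
    · exact absurd h hwj
    · have hσpos : σ = 1 := by rw [hσ, if_pos h]
      rw [hσpos, one_mul] at hzt
      rw [Real.sign_of_pos hzt, Real.sign_of_pos h]
end

section
/- Let x ∈ ℝⁿ be nonzero. A vector y ∈ ℝⁿ lies in Cone(x) if and only if there exist strictly positive real numbers μ_z, one for each z ∈ Λ(x), such that y = ∑_{z ∈ Λ(x)} μ_z·z. Moreover, y lies in the closure of Cone(x) if and only if there exist nonnegative real numbers μ_z, z ∈ Λ(x), with y = ∑_{z ∈ Λ(x)} μ_z·z. -/
open Real Filter Set

/-- The vertex set `Λ(x)` of a nonzero `x`, relative to a permutation `σ` sorting the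
coordinates of `x` by decreasing absolute value: for each admissible `j` (0-indexed),
the unit vector `(1/√(j+1))·∑_{l ≤ j} sgn(x_{σ(l)})·e_{σ(l)}`. -/
noncomputable def vertexSet {k : ℕ} (σ : Equiv.Perm (Fin k)) (x : Fin k → ℝ) :
    Set (Fin k → ℝ) :=
  {u | ∃ j : ℕ, ∃ hj : j < k, x (σ ⟨j, hj⟩) ≠ 0 ∧
      (j + 1 = k ∨ ∃ hj1 : j + 1 < k, |x (σ ⟨j + 1, hj1⟩)| < |x (σ ⟨j, hj⟩)|) ∧
      u = fun i => if ∃ l : Fin k, (l : ℕ) ≤ j ∧ σ l = i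
            then Real.sign (x i) / Real.sqrt (j + 1) else 0}

/-- The cone of `x`: vectors in the orthant of `x` whose coordinates are ordered in
absolute value in the same way as those of `x`. -/
def ConeOf {k : ℕ} (x : Fin k → ℝ) : Set (Fin k → ℝ) :=
  {y | (∀ i, Real.sign (y i) = Real.sign (x i)) ∧
       ∀ i j, Real.sign (|y j| - |y i|) = Real.sign (|x j| - |x i|)}

/-! Sort the coordinates of `x` by decreasing absolute value, `b₀ ≥ ⋯ ≥ b_{n-1} ≥ b_n = 0`, and
call `j` a break when `b_{j+1} < b_j`; the vertices `u_j` are indexed by the breaks. The `i`-th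
coordinate of `∑ c_j u_j` is `sgn(x_i)` times the tail sum of `c_j / √(j+1)` over the breaks
`j ≥ σ⁻¹ i`. When all `c_j > 0` these tail sums drop exactly where `b` drops, so they are ordered
like the `|x_i|` and the combination lies in `Cone(x)`. Conversely, for `y ∈ Cone(x)` the gaps of
the sorted `|y_i|` are positive exactly at the breaks of `x` and vanish elsewhere, so telescoping
writes `y` with coefficients `c_j = √(j+1) · gap_j(y)`. These coefficients depend continuously
on `y`, so the representation and `c_j ≥ 0` pass to the closure; conversely `c + ε` is positive. -/

open Finset Topology

namespace Real

lemma sign_mul_abs_self (a : ℝ) : sign a * |a| = a := by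
  rcases lt_trichotomy a 0 with h | rfl | h
  · rw [sign_of_neg h, abs_of_neg h]; ring
  · simp
  · rw [sign_of_pos h, abs_of_pos h, one_mul]

lemma sign_abs (a : ℝ) : sign |a| = |sign a| := by
  rcases lt_trichotomy a 0 with h | rfl | h
  · rw [sign_of_neg h, sign_of_pos (abs_pos.2 h.ne)]; norm_num
  · simp
  · rw [sign_of_pos h, sign_of_pos (abs_pos.2 h.ne'), abs_one]

lemma sign_eq_one_iff {a : ℝ} : sign a = 1 ↔ 0 < a := by
  refine ⟨fun h => ?_, sign_of_pos⟩
  rcases lt_trichotomy a 0 with ha | rfl | ha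
  · rw [sign_of_neg ha] at h; norm_num at h
  · rw [sign_zero] at h; norm_num at h
  · exact ha

lemma sign_eq_sign_of_nonneg {a b : ℝ} (ha : 0 ≤ a) (hb : 0 ≤ b) (h : 0 < a ↔ 0 < b) :
    sign a = sign b := by
  rcases ha.eq_or_lt with rfl | ha
  · rw [le_antisymm (not_lt.1 (mt h.2 (lt_irrefl 0))) hb]
  · rw [sign_of_pos ha, sign_of_pos (h.1 ha)]

lemma sign_eq_of_eq_sign_mul_abs {a y : ℝ} (h : y = sign a * |y|) (h0 : y = 0 → a = 0) :
    sign y = sign a := by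
  rcases eq_or_ne y 0 with rfl | hy
  · rw [h0 rfl]
  · exact mul_right_cancel₀ (abs_ne_zero.2 hy) ((sign_mul_abs_self y).trans h)

end Real

lemma sign_sum_eq_sign_sum {ι : Type*} {s : Finset ι} {w w' : ι → ℝ}
    (hw : ∀ j ∈ s, 0 ≤ w j) (hw' : ∀ j ∈ s, 0 ≤ w' j) (hpos : ∀ j ∈ s, 0 < w j ↔ 0 < w' j) :
    Real.sign (∑ j ∈ s, w j) = Real.sign (∑ j ∈ s, w' j) :=
  Real.sign_eq_sign_of_nonneg (sum_nonneg hw) (sum_nonneg hw') <| by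
    rw [sum_pos_iff_of_nonneg hw, sum_pos_iff_of_nonneg hw']
    exact exists_congr fun j => and_congr_right fun hj => hpos j hj

lemma sign_sum_Ico_sub_eq {N : ℕ} {w w' : ℕ → ℝ} (hw : ∀ j < N, 0 ≤ w j)
    (hw' : ∀ j < N, 0 ≤ w' j) (hpos : ∀ j < N, 0 < w j ↔ 0 < w' j) {l₁ l₂ : ℕ}
    (h₁ : l₁ ≤ N) (h₂ : l₂ ≤ N) :
    Real.sign (∑ j ∈ Finset.Ico l₂ N, w j - ∑ j ∈ Finset.Ico l₁ N, w j)
      = Real.sign (∑ j ∈ Finset.Ico l₂ N, w' j - ∑ j ∈ Finset.Ico l₁ N, w' j) := by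
  wlog h : l₁ ≤ l₂ generalizing l₁ l₂
  · rw [← neg_sub, Real.sign_neg, this h₂ h₁ (le_of_not_ge h), ← Real.sign_neg, neg_sub]
  rw [← sum_Ico_consecutive w h h₂, ← sum_Ico_consecutive w' h h₂, sub_add_cancel_right,
    sub_add_cancel_right, Real.sign_neg, Real.sign_neg]
  have hlt : ∀ j ∈ Finset.Ico l₁ l₂, j < N := fun j hj => (Finset.mem_Ico.1 hj).2.trans_le h₂
  exact congrArg Neg.neg <| sign_sum_eq_sign_sum (fun j hj => hw j (hlt j hj))
    (fun j hj => hw' j (hlt j hj)) fun j hj => hpos j (hlt j hj)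

lemma exists_finsum_mem_image_smul_iff {ι R E : Type*} [Nonempty ι] [Semiring R]
    [AddCommMonoid E] [Module R E] (p : R → Prop) {f : ι → E} {t : Finset ι}
    (hf : Set.InjOn f t) (y : E) :
    (∃ μ : E → R, (∀ z ∈ f '' t, p (μ z)) ∧ y = ∑ᶠ z ∈ f '' t, μ z • z) ↔
      ∃ c : ι → R, (∀ j ∈ t, p (c j)) ∧ y = ∑ j ∈ t, c j • f j := by
  simp only [Set.forall_mem_image, finsum_mem_image hf, finsum_mem_coe_finset (fun j => _ • f j)]
  refine ⟨fun ⟨μ, hμ, hy⟩ => ⟨μ ∘ f, hμ, hy⟩, fun ⟨c, hc, hy⟩ => ?_⟩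
  have hinv : ∀ j ∈ t, c (Function.invFunOn f t (f j)) = c j :=
    fun j hj => congrArg c (hf.leftInvOn_invFunOn hj)
  exact ⟨c ∘ Function.invFunOn f t, fun j hj => by simpa [hinv j hj] using hc j hj,
    hy.trans (sum_congr rfl fun j hj => by rw [Function.comp_apply, hinv j hj])⟩

namespace VertexSet

variable {n : ℕ} (σ : Equiv.Perm (Fin n))

/-- `|y (σ l)|`, padded with zeros for `l ≥ n` so that the last gap is `|y (σ (n-1))|`. -/
noncomputable def sortedAbs (y : Fin n → ℝ) (l : ℕ) : ℝ :=
  if h : l < n then |y (σ ⟨l, h⟩)| else 0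

noncomputable def gap (y : Fin n → ℝ) (j : ℕ) : ℝ :=
  sortedAbs σ y j - sortedAbs σ y (j + 1)

/-- The admissible `k - 1` in the definition of `Λ(x)` (see `vertexSet_eq_image`). -/
noncomputable def breaks (x : Fin n → ℝ) : Finset ℕ :=
  (range n).filter fun j => 0 < gap σ x j

noncomputable def vertex (x : Fin n → ℝ) (j : ℕ) : Fin n → ℝ :=
  fun i => if (σ.symm i : ℕ) ≤ j then Real.sign (x i) / √(j + 1) else 0

variable {σ} {x y : Fin n → ℝ}

lemma sortedAbs_of_lt {l : ℕ} (h : l < n) : sortedAbs σ y l = |y (σ ⟨l, h⟩)| := dif_pos h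

lemma sortedAbs_of_le {l : ℕ} (h : n ≤ l) : sortedAbs σ y l = 0 := dif_neg (not_lt.2 h)

lemma sortedAbs_nonneg {l : ℕ} : 0 ≤ sortedAbs σ y l := by
  unfold sortedAbs
  split_ifs
  · exact abs_nonneg _
  · exact le_rfl

lemma sortedAbs_symm_apply (i : Fin n) : sortedAbs σ y (σ.symm i) = |y i| := by
  rw [sortedAbs_of_lt (σ.symm i).isLt, Fin.eta, Equiv.apply_symm_apply]

lemma continuous_sortedAbs (l : ℕ) : Continuous fun y : Fin n → ℝ => sortedAbs σ y l := by
  unfold sortedAbs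
  split_ifs
  · exact (continuous_apply _).abs
  · exact continuous_const

lemma sortedAbs_eq_sum_gap (l : ℕ) : sortedAbs σ y l = ∑ j ∈ Finset.Ico l n, gap σ y j := by
  rcases le_total l n with h | h
  · have hgap : ∀ j, gap σ y j = -(sortedAbs σ y (j + 1) - sortedAbs σ y j) :=
      fun j => (neg_sub _ _).symm
    rw [sum_congr rfl fun j _ => hgap j, sum_neg_distrib, sum_Ico_sub (sortedAbs σ y) h,
      sortedAbs_of_le le_rfl, zero_sub, neg_neg]
  · rw [Finset.Ico_eq_empty_of_le h, sum_empty, sortedAbs_of_le h]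

lemma gap_nonneg (hσ : ∀ a b : Fin n, a ≤ b → |x (σ b)| ≤ |x (σ a)|) (j : ℕ) :
    0 ≤ gap σ x j := by
  rw [gap, sub_nonneg]
  by_cases h : j + 1 < n
  · rw [sortedAbs_of_lt h, sortedAbs_of_lt (Nat.lt_of_succ_lt h)]
    exact hσ _ _ (Fin.mk_le_mk.2 j.le_succ)
  · rw [sortedAbs_of_le (not_lt.1 h)]
    exact sortedAbs_nonneg

lemma mem_breaks {j : ℕ} : j ∈ breaks σ x ↔ j < n ∧ 0 < gap σ x j := by
  rw [breaks, Finset.mem_filter, Finset.mem_range]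

lemma sign_gap_of_mem_coneOf (hy : y ∈ ConeOf x) {j : ℕ} (hj : j < n) :
    Real.sign (gap σ y j) = Real.sign (gap σ x j) := by
  unfold gap
  by_cases h : j + 1 < n
  · rw [sortedAbs_of_lt h, sortedAbs_of_lt hj, sortedAbs_of_lt h, sortedAbs_of_lt hj]
    exact hy.2 _ _
  · rw [sortedAbs_of_le (not_lt.1 h), sortedAbs_of_le (not_lt.1 h), sortedAbs_of_lt hj,
      sortedAbs_of_lt hj, sub_zero, sub_zero, Real.sign_abs, Real.sign_abs, hy.1]

lemma gap_pos_of_mem_coneOf (hy : y ∈ ConeOf x) {j : ℕ} (hj : j ∈ breaks σ x) :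
    0 < gap σ y j := by
  obtain ⟨hjn, hgap⟩ := mem_breaks.1 hj
  rw [← Real.sign_eq_one_iff, sign_gap_of_mem_coneOf hy hjn, Real.sign_of_pos hgap]

lemma gap_eq_zero_of_mem_coneOf (hσ : ∀ a b : Fin n, a ≤ b → |x (σ b)| ≤ |x (σ a)|)
    (hy : y ∈ ConeOf x) {j : ℕ} (hj : j < n) (hb : j ∉ breaks σ x) : gap σ y j = 0 := by
  have hx : gap σ x j = 0 :=
    (gap_nonneg hσ j).eq_of_not_lt' fun hpos => hb (mem_breaks.2 ⟨hj, hpos⟩)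
  rw [← Real.sign_eq_zero_iff, sign_gap_of_mem_coneOf hy hj, hx, Real.sign_zero]

lemma sum_smul_vertex_apply (c : ℕ → ℝ) (i : Fin n) :
    (∑ j ∈ breaks σ x, c j • vertex σ x j) i = Real.sign (x i) *
      ∑ j ∈ Finset.Ico (σ.symm i : ℕ) n, if j ∈ breaks σ x then c j / √(j + 1) else 0 := by
  calc (∑ j ∈ breaks σ x, c j • vertex σ x j) i
      = ∑ j ∈ breaks σ x with (σ.symm i : ℕ) ≤ j, Real.sign (x i) * (c j / √(j + 1)) := by
        rw [Finset.sum_apply, sum_filter]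
        refine sum_congr rfl fun j _ => ?_
        simp only [Pi.smul_apply, smul_eq_mul, vertex]
        split_ifs <;> ring
    _ = _ := by
        simp only [sum_ite_mem, mul_sum]
        congr 1
        ext j
        simp only [Finset.mem_filter, Finset.mem_inter, Finset.mem_Ico, mem_breaks]
        tauto

lemma mem_coneOf_of_eq_sign_mul_sum (hσ : ∀ a b : Fin n, a ≤ b → |x (σ b)| ≤ |x (σ a)|)
    {w : ℕ → ℝ} (hw : ∀ j < n, 0 ≤ w j) (hpos : ∀ j < n, 0 < w j ↔ 0 < gap σ x j)
    (hy : ∀ i, y i = Real.sign (x i) * ∑ j ∈ Finset.Ico (σ.symm i : ℕ) n, w j) :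
    y ∈ ConeOf x := by
  set F : ℕ → ℝ := fun l => ∑ j ∈ Finset.Ico l n, w j
  have horder : ∀ l₁ l₂, l₁ ≤ n → l₂ ≤ n →
      Real.sign (F l₂ - F l₁) = Real.sign (sortedAbs σ x l₂ - sortedAbs σ x l₁) := by
    intro l₁ l₂ h₁ h₂
    rw [sortedAbs_eq_sum_gap, sortedAbs_eq_sum_gap]
    exact sign_sum_Ico_sub_eq hw (fun j _ => gap_nonneg hσ j) hpos h₁ h₂
  have hsign : ∀ i, Real.sign (F (σ.symm i)) = Real.sign |x i| := by
    intro i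
    have h := horder _ n (σ.symm i).isLt.le le_rfl
    rwa [sortedAbs_of_le le_rfl, sortedAbs_symm_apply, show F n = 0 by simp [F], zero_sub,
      zero_sub, Real.sign_neg, Real.sign_neg, neg_inj] at h
  have habs : ∀ i, |y i| = F (σ.symm i) := fun i => by
    rw [hy, abs_mul, ← Real.sign_abs, ← hsign, Real.sign_mul_abs_self]
  refine ⟨fun i => Real.sign_eq_of_eq_sign_mul_abs (by rw [habs]; exact hy i) fun h0 => ?_,
    fun i k => by rw [habs, habs, horder _ _ (σ.symm i).isLt.le (σ.symm k).isLt.le,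
      sortedAbs_symm_apply, sortedAbs_symm_apply]⟩
  rw [← abs_eq_zero, ← Real.sign_eq_zero_iff, ← hsign, ← habs, h0, abs_zero, Real.sign_zero]

lemma sum_smul_vertex_mem_coneOf (hσ : ∀ a b : Fin n, a ≤ b → |x (σ b)| ≤ |x (σ a)|)
    {c : ℕ → ℝ} (hc : ∀ j ∈ breaks σ x, 0 < c j) :
    ∑ j ∈ breaks σ x, c j • vertex σ x j ∈ ConeOf x := by
  refine mem_coneOf_of_eq_sign_mul_sum hσ (fun j _ => ?_) (fun j hj => ?_)
    (sum_smul_vertex_apply c)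
  · split_ifs with hb
    · exact (div_pos (hc j hb) (by positivity)).le
    · exact le_rfl
  · split_ifs with hb
    · exact iff_of_true (div_pos (hc j hb) (by positivity)) (mem_breaks.1 hb).2
    · exact iff_of_false (lt_irrefl 0) fun hpos => hb (mem_breaks.2 ⟨hj, hpos⟩)

lemma eq_sum_smul_vertex_of_mem_coneOf (hσ : ∀ a b : Fin n, a ≤ b → |x (σ b)| ≤ |x (σ a)|)
    (hy : y ∈ ConeOf x) :
    y = ∑ j ∈ breaks σ x, (gap σ y j * √(j + 1)) • vertex σ x j := by
  funext i
  have hterm : ∀ j ∈ Finset.Ico (σ.symm i : ℕ) n,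
      (if j ∈ breaks σ x then gap σ y j * √(j + 1) / √(j + 1) else 0) = gap σ y j := by
    intro j hj
    split_ifs with hb
    · exact mul_div_cancel_right₀ _ (by positivity)
    · exact (gap_eq_zero_of_mem_coneOf hσ hy (Finset.mem_Ico.1 hj).2 hb).symm
  rw [sum_smul_vertex_apply, sum_congr rfl hterm, ← sortedAbs_eq_sum_gap, sortedAbs_symm_apply,
    ← hy.1 i, Real.sign_mul_abs_self]

theorem mem_coneOf_iff (hσ : ∀ a b : Fin n, a ≤ b → |x (σ b)| ≤ |x (σ a)|) :
    y ∈ ConeOf x ↔ ∃ c : ℕ → ℝ,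
      (∀ j ∈ breaks σ x, 0 < c j) ∧ y = ∑ j ∈ breaks σ x, c j • vertex σ x j := by
  refine ⟨fun hy => ⟨fun j => gap σ y j * √(j + 1),
    fun j hj => mul_pos (gap_pos_of_mem_coneOf hy hj) (by positivity),
    eq_sum_smul_vertex_of_mem_coneOf hσ hy⟩, ?_⟩
  rintro ⟨c, hc, rfl⟩
  exact sum_smul_vertex_mem_coneOf hσ hc

theorem mem_closure_coneOf_iff (hσ : ∀ a b : Fin n, a ≤ b → |x (σ b)| ≤ |x (σ a)|) :
    y ∈ closure (ConeOf x) ↔ ∃ c : ℕ → ℝ,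
      (∀ j ∈ breaks σ x, 0 ≤ c j) ∧ y = ∑ j ∈ breaks σ x, c j • vertex σ x j := by
  have continuous_gap : ∀ j, Continuous fun y : Fin n → ℝ => gap σ y j :=
    fun j => (continuous_sortedAbs j).sub (continuous_sortedAbs (j + 1))
  constructor
  · intro hy
    refine ⟨fun j => gap σ y j * √(j + 1), fun j hj => mul_nonneg ?_ (Real.sqrt_nonneg _), ?_⟩
    · exact closure_minimal (fun y hy => (gap_pos_of_mem_coneOf hy hj).le)
        (isClosed_le continuous_const (continuous_gap j)) hy
    · exact closure_minimal (fun y hy => eq_sum_smul_vertex_of_mem_coneOf hσ hy)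
        (isClosed_eq continuous_id <| continuous_finsetSum _ fun j _ =>
          ((continuous_gap j).mul continuous_const).smul continuous_const) hy
  · rintro ⟨c, hc, rfl⟩
    have hlim : Tendsto (fun ε : ℝ => ∑ j ∈ breaks σ x, (c j + ε) • vertex σ x j) (𝓝[>] 0)
        (𝓝 (∑ j ∈ breaks σ x, c j • vertex σ x j)) := by
      refine tendsto_nhdsWithin_of_tendsto_nhds ?_
      simpa using tendsto_finsetSum (breaks σ x) fun j _ =>
        ((tendsto_const_nhds (x := c j)).add (tendsto_id (x := 𝓝 (0 : ℝ)))).smul_const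
          (vertex σ x j)
    exact mem_closure_of_tendsto hlim <| eventually_nhdsWithin_of_forall fun ε hε =>
      sum_smul_vertex_mem_coneOf hσ fun j hj => add_pos_of_nonneg_of_pos (hc j hj) hε

lemma vertexSet_eq_image : vertexSet σ x = vertex σ x '' breaks σ x := by
  have hvertex : ∀ j, (fun i => if ∃ l : Fin n, (l : ℕ) ≤ j ∧ σ l = i
      then Real.sign (x i) / √(j + 1) else 0) = vertex σ x j := fun j => funext fun i =>
    if_congr ⟨fun ⟨l, hl, hli⟩ => hli ▸ by rwa [Equiv.symm_apply_apply],
      fun h => ⟨σ.symm i, h, σ.apply_symm_apply i⟩⟩ rfl rfl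
  ext u
  simp only [vertexSet, Set.mem_ofPred_eq, Set.mem_image, mem_coe, mem_breaks, gap, sub_pos,
    hvertex]
  constructor
  · rintro ⟨j, hj, hx0, hlast, rfl⟩
    refine ⟨j, ⟨hj, ?_⟩, rfl⟩
    rcases hlast with hlast | ⟨hj1, hlt⟩
    · rwa [sortedAbs_of_le hlast.ge, sortedAbs_of_lt hj, abs_pos]
    · rwa [sortedAbs_of_lt hj1, sortedAbs_of_lt hj]
  · rintro ⟨j, ⟨hj, hlt⟩, rfl⟩
    refine ⟨j, hj, ?_, ?_, rfl⟩
    · rw [sortedAbs_of_lt hj] at hlt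
      exact abs_pos.1 (sortedAbs_nonneg.trans_lt hlt)
    · by_cases hj1 : j + 1 < n
      · exact Or.inr ⟨hj1, by rwa [sortedAbs_of_lt hj1, sortedAbs_of_lt hj] at hlt⟩
      · exact Or.inl (by omega)

lemma vertex_injOn : Set.InjOn (vertex σ x) (breaks σ x) := by
  intro a ha b hb hab
  wlog hlt : a < b generalizing a b
  · rcases (not_lt.1 hlt).eq_or_lt with h | h
    · exact h.symm
    · exact (this hb ha hab.symm h).symm
  exfalso
  obtain ⟨hbn, hgap⟩ := mem_breaks.1 (mem_coe.1 hb)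
  have hx : x (σ ⟨b, hbn⟩) ≠ 0 := by
    rw [← abs_pos, ← sortedAbs_of_lt hbn]
    exact hgap.trans_le (sub_le_self _ sortedAbs_nonneg)
  have h := congrFun hab (σ ⟨b, hbn⟩)
  simp only [vertex, Equiv.symm_apply_apply, if_neg hlt.not_ge, le_rfl, if_true] at h
  exact div_ne_zero (mt Real.sign_eq_zero_iff.1 hx) (by positivity) h.symm

end VertexSet

theorem stmt19_general (n : ℕ) (x : Fin n → ℝ)
    (σ : Equiv.Perm (Fin n))
    (hσ : ∀ a b : Fin n, a ≤ b → |x (σ b)| ≤ |x (σ a)|)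
    (y : Fin n → ℝ) :
    (y ∈ ConeOf x ↔ ∃ μ : (Fin n → ℝ) → ℝ,
      (∀ z ∈ vertexSet σ x, 0 < μ z) ∧ y = ∑ᶠ z ∈ vertexSet σ x, μ z • z) ∧
    (y ∈ closure (ConeOf x) ↔ ∃ μ : (Fin n → ℝ) → ℝ,
      (∀ z ∈ vertexSet σ x, 0 ≤ μ z) ∧ y = ∑ᶠ z ∈ vertexSet σ x, μ z • z) := by
  have hinj := VertexSet.vertex_injOn (σ := σ) (x := x)
  rw [VertexSet.vertexSet_eq_image]
  exact ⟨(VertexSet.mem_coneOf_iff hσ).trans (exists_finsum_mem_image_smul_iff _ hinj y).symm,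
    (VertexSet.mem_closure_coneOf_iff hσ).trans (exists_finsum_mem_image_smul_iff _ hinj y).symm⟩

/-- Characterization of `Cone(x)` via the vertex set `Λ(x)`: a vector lies in `Cone(x)`
iff it is a strictly positive combination of the vertices of `x`, and it lies in the
closure of `Cone(x)` iff it is a nonnegative combination of the vertices of `x`. -/
theorem stmt19 (n : ℕ) (x : Fin n → ℝ) (hx : x ≠ 0)
    (σ : Equiv.Perm (Fin n))
    (hσ : ∀ a b : Fin n, a ≤ b → |x (σ b)| ≤ |x (σ a)|)
    (y : Fin n → ℝ) :
    (y ∈ ConeOf x ↔ ∃ μ : (Fin n → ℝ) → ℝ,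
      (∀ z ∈ vertexSet σ x, 0 < μ z) ∧ y = ∑ᶠ z ∈ vertexSet σ x, μ z • z) ∧
    (y ∈ closure (ConeOf x) ↔ ∃ μ : (Fin n → ℝ) → ℝ,
      (∀ z ∈ vertexSet σ x, 0 ≤ μ z) ∧ y = ∑ᶠ z ∈ vertexSet σ x, μ z • z) :=
  stmt19_general n x σ hσ y
end
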